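/- Let A be a commutative ring and B an A-algebra such that the multiplication map B ⊗[A] B → B (sending b ⊗ b' to b·b') is bijective. Then the restriction-of-scalars functor from the category of B-modules to the category of A-modules (ModuleCat B ⥤ ModuleCat A) is fully faithful. -/

import Mathlib

/-!
Injectivity of multiplication forces `b ⊗ 1 = 1 ⊗ b` in `B ⊗[A] B`. Applying to this identity the
map `B ⊗[A] B → N`, `b ⊗ b' ↦ b • f (b' • m)`, shows that every `A`-linear map `f : M → N` between
`B`-modules is already `B`-linear, which is fullness of restriction of scalars.
-/

open TensorProduct CategoryTheory

section

variable {A B : Type*} [CommSemiring A] [Semiring B] [Algebra A B]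

theorem TensorProduct.tmul_one_eq_one_tmul_of_injective_mul'
    (h : Function.Injective (LinearMap.mul' A B)) (b : B) :
    b ⊗ₜ[A] (1 : B) = 1 ⊗ₜ b :=
  h (by simp)

variable {M N : Type*} [AddCommMonoid M] [Module A M] [Module B M] [IsScalarTower A B M]
  [AddCommMonoid N] [Module A N] [Module B N] [IsScalarTower A B N]

theorem LinearMap.map_smul_of_injective_mul' (h : Function.Injective (LinearMap.mul' A B))
    (f : M →ₗ[A] N) (b : B) (m : M) : f (b • m) = b • f m := by
  let φ : B →ₗ[A] B →ₗ[A] N := (Algebra.lsmul A A N).toLinearMap.compl₂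
    (f ∘ₗ (LinearMap.toSpanSingleton B M m).restrictScalars A)
  simpa [φ] using congr(TensorProduct.lift φ $(tmul_one_eq_one_tmul_of_injective_mul' h b)).symm

theorem LinearMap.restrictScalars_surjective_of_injective_mul'
    (h : Function.Injective (LinearMap.mul' A B)) :
    Function.Surjective (LinearMap.restrictScalars A : (M →ₗ[B] N) → M →ₗ[A] N) :=
  fun f => ⟨{ f with map_smul' := f.map_smul_of_injective_mul' h }, rfl⟩

end

/-- If the multiplication map `B ⊗[A] B → B` is bijective (underived formal noncommutative
Zariski immersion), then the restriction-of-scalars functor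
`ModuleCat B ⥤ ModuleCat A` is fully faithful. -/
theorem zariski_immersion_restrictScalars_fullyFaithful
    {A B : Type u} [CommRing A] [Ring B] [Algebra A B]
    (h : Function.Bijective (LinearMap.mul' A B)) :
    (ModuleCat.restrictScalars.{u} (algebraMap A B)).Full ∧
      (ModuleCat.restrictScalars.{u} (algebraMap A B)).Faithful := by
  refine ⟨⟨fun {M N} f => ?_⟩, inferInstance⟩
  have (X : ModuleCat.{u} B) :
      IsScalarTower A B ((ModuleCat.restrictScalars.{u} (algebraMap A B)).obj X) :=
    IsScalarTower.of_algebraMap_smul fun _ _ => rfl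
  obtain ⟨g, hg⟩ := LinearMap.restrictScalars_surjective_of_injective_mul' h.injective f.hom
  exact ⟨ModuleCat.ofHom (X := M) (Y := N) g, by ext m; exact congr($hg m)⟩
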